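/- Adjoint symmetry of E₃: write E₃(e₁,…,e₆) = a₃∂³+a₂∂²+a₁∂+a₀ with the coefficients aᵢ(x) as in the definition below, and define the adjoint action on a function u by (E₃*u)(x) = (a₃u)'''(x) − (a₂u)''(x) + (a₁u)'(x) − a₀(x)u(x). Then for all e₁,…,e₆ ∈ ℂ, every function u holomorphic on an open set U ⊆ ℂ, and every x ∈ U, (E₃*u)(x) = (E₃(−e₁,−e₂,−e₃,−e₄,2−e₅,2−e₆)u)(x). -/

import Mathlib

/-!
By the Leibniz rule, the formal adjoint of `a₃∂³ + a₂∂² + a₁∂ + a₀` is again a third-order operator,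
with coefficients `a₃`, `3a₃' - a₂`, `3a₃'' - 2a₂' + a₁` and `a₃''' - a₂'' + a₁' - a₀`; this uses
`C³` regularity of `u` at `x`, which a holomorphic `u` has since it is analytic. For `E₃` the coefficients are
polynomials in `x`, and the claim reduces to three polynomial identities in `x` and the `eᵢ` matching
the last three of these coefficients with those of `E₃(-e₁, -e₂, -e₃, -e₄, 2 - e₅, 2 - e₆)`.
-/

/-- The accessory parameter A₀₀(e₁,…,e₆) of the equation E₃,
with e₇ := 3 − (e₁+⋯+e₆). -/
noncomputable def A00 (e1 e2 e3 e4 e5 e6 : ℂ) : ℂ :=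
  let e7 := 3 - (e1 + e2 + e3 + e4 + e5 + e6)
  (-4*(e1 + e2 - e3 - e4)^3 - 27*e5*e6*e7
    + 9*(e1 + e2 - e3 - e4)*(e5*e6 + e5*e7 + e6*e7 - 2)
    + 9*e1*e2*(e1 + e2 - 1) + 18*(e1 + e2 - 1)*(e3^2 + e3*e4 + e4^2)
    - 9*e3*e4*(e3 + e4 - 1) - 18*(e3 + e4 - 1)*(e1^2 + e1*e2 + e2^2)) / 54

/-- Coefficient of ∂³ of E₃. -/
noncomputable def E3c3 (x : ℂ) : ℂ := x^2*(x - 1)^2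

/-- Coefficient of ∂² of E₃. -/
noncomputable def E3c2 (e1 e2 e3 e4 e5 e6 : ℂ) (x : ℂ) : ℂ :=
  x*(x - 1)*((6 - e1 - e2 - e3 - e4)*x + e1 + e2 - 3)

/-- Coefficient of ∂ of E₃. -/
noncomputable def E3c1 (e1 e2 e3 e4 e5 e6 : ℂ) (x : ℂ) : ℂ :=
  let e7 := 3 - (e1 + e2 + e3 + e4 + e5 + e6)
  ((e5 + e6 + 1)*e7 + (e6 + 1)*(e5 + 1)) * x^2
  + (-(e5 + e6)*e7 - e1*e2 + e3*e4 - e5*e6 + 2*e1 + 2*e2 - 4) * x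
  + (e1 - 1)*(e2 - 1)

/-- Coefficient of 1 of E₃. -/
noncomputable def E3c0 (e1 e2 e3 e4 e5 e6 : ℂ) (x : ℂ) : ℂ :=
  let e7 := 3 - (e1 + e2 + e3 + e4 + e5 + e6)
  (e5*e6*e7) * x + A00 e1 e2 e3 e4 e5 e6

/-- The operator E₃(e₁,…,e₆) acting on a function u. -/
noncomputable def E3op (e1 e2 e3 e4 e5 e6 : ℂ) (u : ℂ → ℂ) : ℂ → ℂ := fun x =>
  E3c3 x * iteratedDeriv 3 u x + E3c2 e1 e2 e3 e4 e5 e6 x * iteratedDeriv 2 u x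
    + E3c1 e1 e2 e3 e4 e5 e6 x * deriv u x + E3c0 e1 e2 e3 e4 e5 e6 x * u x

/-- The adjoint E₃* acting on a function u:
(E₃*u)(x) = (a₃u)'''(x) − (a₂u)''(x) + (a₁u)'(x) − a₀(x)·u(x). -/
noncomputable def E3adj (e1 e2 e3 e4 e5 e6 : ℂ) (u : ℂ → ℂ) : ℂ → ℂ := fun x =>
  iteratedDeriv 3 (fun y => E3c3 y * u y) x
  - iteratedDeriv 2 (fun y => E3c2 e1 e2 e3 e4 e5 e6 y * u y) x
  + deriv (fun y => E3c1 e1 e2 e3 e4 e5 e6 y * u y) x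
  - E3c0 e1 e2 e3 e4 e5 e6 x * u x

open Polynomial

section FormalAdjoint

variable {𝕜 𝔸 : Type*} [NontriviallyNormedField 𝕜] [NormedCommRing 𝔸] [NormedAlgebra 𝕜 𝔸]

theorem formalAdjoint_thirdOrder_eq {a3 a2 a1 a0 u : 𝕜 → 𝔸} {x : 𝕜}
    (ha3 : ContDiffAt 𝕜 3 a3 x) (ha2 : ContDiffAt 𝕜 2 a2 x) (ha1 : DifferentiableAt 𝕜 a1 x)
    (hu : ContDiffAt 𝕜 3 u x) :
    iteratedDeriv 3 (fun y => a3 y * u y) x - iteratedDeriv 2 (fun y => a2 y * u y) x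
        + deriv (fun y => a1 y * u y) x - a0 x * u x
      = a3 x * iteratedDeriv 3 u x + (3 * deriv a3 x - a2 x) * iteratedDeriv 2 u x
        + (3 * iteratedDeriv 2 a3 x - 2 * deriv a2 x + a1 x) * deriv u x
        + (iteratedDeriv 3 a3 x - iteratedDeriv 2 a2 x + deriv a1 x - a0 x) * u x := by
  rw [iteratedDeriv_fun_mul ha3 hu, iteratedDeriv_fun_mul ha2 (hu.of_le (by norm_num)),
    deriv_fun_mul ha1 (hu.differentiableAt (by norm_num))]
  simp only [Finset.sum_range_succ, Finset.range_one, Finset.sum_singleton, Nat.choose_zero_right,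
    Nat.choose_one_right, Nat.choose_succ_self_right, Nat.choose_self, Nat.reduceAdd, Nat.reduceSub,
    tsub_zero, tsub_self, iteratedDeriv_zero, iteratedDeriv_one, Nat.cast_one, Nat.cast_ofNat]
  ring

end FormalAdjoint

theorem Polynomial.iteratedDeriv_eval {𝕜 : Type*} [NontriviallyNormedField 𝕜] (p : 𝕜[X])
    (n : ℕ) : iteratedDeriv n (fun x => p.eval x) = fun x => (derivative^[n] p).eval x := by
  induction n with
  | zero => simp
  | succ n ih =>
    rw [iteratedDeriv_succ, ih, Function.iterate_succ_apply']
    ext x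
    exact Polynomial.deriv _

section E3

variable (e1 e2 e3 e4 e5 e6 : ℂ)

theorem E3c3_eq_eval : E3c3 = fun x => (X ^ 2 * (X - 1) ^ 2 : ℂ[X]).eval x := by
  ext; simp [E3c3]

theorem E3c2_eq_eval : E3c2 e1 e2 e3 e4 e5 e6
    = fun x => (X * (X - 1) * (C (6 - e1 - e2 - e3 - e4) * X + C (e1 + e2 - 3))).eval x := by
  ext
  simp only [E3c2, eval_mul, eval_add, eval_sub, eval_C, eval_X, eval_one]
  ring

theorem E3c1_eq_eval : E3c1 e1 e2 e3 e4 e5 e6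
    = let e7 := 3 - (e1 + e2 + e3 + e4 + e5 + e6)
      fun x => (C ((e5 + e6 + 1) * e7 + (e6 + 1) * (e5 + 1)) * X ^ 2
        + C (-(e5 + e6) * e7 - e1 * e2 + e3 * e4 - e5 * e6 + 2 * e1 + 2 * e2 - 4) * X
        + C ((e1 - 1) * (e2 - 1))).eval x := by
  ext; simp [E3c1]

theorem E3_adjoint_coeff2 (x : ℂ) :
    3 * deriv E3c3 x - E3c2 e1 e2 e3 e4 e5 e6 x
      = E3c2 (-e1) (-e2) (-e3) (-e4) (2 - e5) (2 - e6) x := by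
  rw [E3c3_eq_eval, Polynomial.deriv]
  simp only [E3c2, derivative_mul, derivative_pow, derivative_sub, derivative_X, derivative_one,
    eval_add, eval_sub, eval_mul, eval_pow, eval_C, eval_X, eval_one, eval_zero]
  ring

theorem E3_adjoint_coeff1 (x : ℂ) :
    3 * iteratedDeriv 2 E3c3 x - 2 * deriv (E3c2 e1 e2 e3 e4 e5 e6) x + E3c1 e1 e2 e3 e4 e5 e6 x
      = E3c1 (-e1) (-e2) (-e3) (-e4) (2 - e5) (2 - e6) x := by
  rw [E3c3_eq_eval, E3c2_eq_eval, Polynomial.iteratedDeriv_eval, Polynomial.deriv]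
  simp only [E3c1, Function.iterate_succ_apply', Function.iterate_zero_apply, derivative_mul,
    derivative_pow, derivative_add, derivative_sub, derivative_X, derivative_C, derivative_one,
    derivative_zero, eval_add, eval_sub, eval_mul, eval_pow, eval_C, eval_X, eval_one, eval_zero]
  ring

theorem E3_adjoint_coeff0 (x : ℂ) :
    iteratedDeriv 3 E3c3 x - iteratedDeriv 2 (E3c2 e1 e2 e3 e4 e5 e6) x
        + deriv (E3c1 e1 e2 e3 e4 e5 e6) x - E3c0 e1 e2 e3 e4 e5 e6 x
      = E3c0 (-e1) (-e2) (-e3) (-e4) (2 - e5) (2 - e6) x := by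
  rw [E3c3_eq_eval, E3c2_eq_eval, E3c1_eq_eval]
  simp only [Polynomial.iteratedDeriv_eval, Polynomial.deriv]
  simp only [E3c0, A00, Function.iterate_succ_apply', Function.iterate_zero_apply, derivative_mul,
    derivative_pow, derivative_add, derivative_sub, derivative_X, derivative_C, derivative_one,
    derivative_zero, eval_add, eval_sub, eval_mul, eval_pow, eval_C, eval_X, eval_one, eval_zero]
  ring

end E3

theorem E3_adjoint_symmetry (e1 e2 e3 e4 e5 e6 : ℂ) (U : Set ℂ) (hU : IsOpen U)
    (u : ℂ → ℂ) (hu : DifferentiableOn ℂ u U) (x : ℂ) (hx : x ∈ U) :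
    E3adj e1 e2 e3 e4 e5 e6 u x
      = E3op (-e1) (-e2) (-e3) (-e4) (2 - e5) (2 - e6) u x := by
  have hu3 : ContDiffAt ℂ 3 u x := (hu.analyticAt (hU.mem_nhds hx)).contDiffAt
  have hc3 : ContDiff ℂ 3 E3c3 := by unfold E3c3; fun_prop
  have hc2 : ContDiff ℂ 2 (E3c2 e1 e2 e3 e4 e5 e6) := by unfold E3c2; fun_prop
  have hc1 : Differentiable ℂ (E3c1 e1 e2 e3 e4 e5 e6) := by unfold E3c1; fun_prop
  rw [E3adj, formalAdjoint_thirdOrder_eq hc3.contDiffAt hc2.contDiffAt (hc1 x) hu3,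
    E3_adjoint_coeff2, E3_adjoint_coeff1, E3_adjoint_coeff0, E3op]
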